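/- arXiv:2311.18138 — 6 statements merged into one kernel-verified Lean document; each statement's English description precedes it below -/
import Mathlib

section
/- Revelation principle for unknown receiver beliefs in Binary BP: for any finite set of T receiver types with distinct priors p_1 > p_2 > ... > p_T in (0, 1/2], and any messaging policy with an arbitrary finite message space, there is an equivalent messaging policy using at most T+1 messages inducing the same joint distribution over (state, action taken by each type). Equivalently, each message partitions the types into {types taking action 1} and {types taking action 0}, and the set of types taking action 1 upon any message is always an upward-closed set in the prior ordering (a prefix of p_1, ..., p_T), so at most T+1 distinct such partitions arise. -/
/-- A lower set in `Fin T` is determined by its cardinality. -/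
lemma lower_eq_iio {T : ℕ} (S : Set (Fin T))
    (hS : ∀ i j : Fin T, j ≤ i → i ∈ S → j ∈ S) :
    S = {i : Fin T | (i : ℕ) < S.ncard} := by
  ext i
  constructor
  · intro hi
    have hsub : Set.Iic i ⊆ S := fun j hj => hS i j hj hi
    have h1 : (Set.Iic i).ncard ≤ S.ncard :=
      Set.ncard_le_ncard hsub (Set.toFinite S)
    have h2 : (Set.Iic i).ncard = (i : ℕ) + 1 := by
      rw [← Finset.coe_Iic, Set.ncard_coe_finset, Fin.card_Iic]
    simp only [Set.mem_setOf_eq]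
    omega
  · intro hi
    simp only [Set.mem_setOf_eq] at hi
    by_contra hcon
    have hsub : S ⊆ Set.Iio i := by
      intro j hj
      by_contra hj'
      exact hcon (hS j i (le_of_not_gt fun h => hj' h) hj)
    have h1 : S.ncard ≤ (Set.Iio i).ncard :=
      Set.ncard_le_ncard hsub (Set.toFinite _)
    have h2 : (Set.Iio i).ncard = (i : ℕ) := by
      rw [← Finset.coe_Iio, Set.ncard_coe_finset, Fin.card_Iio]
    omega

/-- Revelation principle for unknown receiver beliefs in Binary BP.  With `T` receiver
types whose priors `p i` are strictly decreasing and lie in `(0, 1/2]`, for any message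
(described by its conditional probabilities `σ1 = σ(m|ω=1)`, `σ0 = σ(m|ω=0)`) the set of
types taking action `1` upon that message (type `i` takes action 1 iff
`σ1·p i ≥ σ0·(1-p i)`) is upward closed in the prior ordering; consequently at most
`T + 1` distinct such sets (partitions of the types into action-1 and action-0 groups)
arise over all messages, so `T + 1` messages suffice to reproduce any messaging policy's
induced behavior. -/
theorem stmt5 (T : ℕ) (p : Fin T → ℝ) (hp0 : ∀ i, 0 < p i) (hp : ∀ i, p i ≤ 1/2)
    (hdec : ∀ i j : Fin T, i < j → p j < p i) :
    (∀ σ1 σ0 : ℝ, 0 ≤ σ1 → 0 ≤ σ0 →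
      ∀ i j : Fin T, σ0 * (1 - p i) ≤ σ1 * p i → p i ≤ p j →
        σ0 * (1 - p j) ≤ σ1 * p j) ∧
    Set.ncard {S : Set (Fin T) | ∃ σ1 σ0 : ℝ, 0 ≤ σ1 ∧ 0 ≤ σ0 ∧
      S = {i | σ0 * (1 - p i) ≤ σ1 * p i}} ≤ T + 1 := by
  have key : ∀ σ1 σ0 : ℝ, 0 ≤ σ1 → 0 ≤ σ0 →
      ∀ i j : Fin T, σ0 * (1 - p i) ≤ σ1 * p i → p i ≤ p j →
        σ0 * (1 - p j) ≤ σ1 * p j := by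
    intro σ1 σ0 h1 h0 i j hij hpij
    calc σ0 * (1 - p j) ≤ σ0 * (1 - p i) := by nlinarith
      _ ≤ σ1 * p i := hij
      _ ≤ σ1 * p j := by nlinarith
  refine ⟨key, ?_⟩
  set F := {S : Set (Fin T) | ∃ σ1 σ0 : ℝ, 0 ≤ σ1 ∧ 0 ≤ σ0 ∧
      S = {i | σ0 * (1 - p i) ≤ σ1 * p i}} with hF
  have hsub : F ⊆ (fun n : ℕ => {i : Fin T | (i : ℕ) < n}) '' Set.Iic T := by
    rintro S ⟨σ1, σ0, h1, h0, rfl⟩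
    refine ⟨Set.ncard {i : Fin T | σ0 * (1 - p i) ≤ σ1 * p i}, ?_, ?_⟩
    · exact le_trans (Set.ncard_le_ncard (Set.subset_univ _) (Set.toFinite _))
        (by simp [Set.ncard_univ])
    · symm
      apply lower_eq_iio
      intro i j hji hi
      have : p i ≤ p j := by
        rcases lt_or_eq_of_le hji with h | h
        · exact le_of_lt (hdec j i h)
        · exact le_of_eq (by rw [h])
      exact key σ1 σ0 h1 h0 i j hi this
  calc F.ncard ≤ ((fun n : ℕ => {i : Fin T | (i : ℕ) < n}) '' Set.Iic T).ncard :=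
        Set.ncard_le_ncard hsub ((Set.finite_Iic T).image _)
    _ ≤ (Set.Iic T).ncard := Set.ncard_image_le (Set.finite_Iic T)
    _ = T + 1 := by rw [← Finset.coe_Iic, Set.ncard_coe_finset, Nat.card_Iic]
end

section
/- Optimal messaging policy under type uncertainty in Binary BP: given receiver types τ_L, ..., τ_H with priors p_L > p_{L+1} > ... > p_H (all in (0,1/2]) and a prior distribution P over types, the maximum sender expected utility over all BIC messaging policies equals max over i' ∈ {L,...,H} of Σ_{i=L}^{i'} P(τ_i) · (p_i + (1-p_i)·p_{i'}/(1-p_{i'})), achieved by the policy that sends message m=1 with probability 1 in state ω=1 and with probability p_{i'}/(1-p_{i'}) in state ω=0 for the maximizing cutoff i'. -/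
/-- Optimal messaging policy under type uncertainty in Binary BP.  Receiver types
`i : Fin n` have strictly decreasing priors `p i ∈ (0, 1/2]` and the true type is drawn
from a distribution `P`.  A messaging policy with finite message space `Fin m` is given
by `σ : Fin m → Bool → ℝ` (probability of each message in each state); type `i` takes
action `1` on message `μ` iff `σ μ true · p i ≥ σ μ false · (1 - p i)` (ties toward the
recommendation), and the sender gets utility `1` exactly when action `1` is taken.
The maximum sender expected utility over all such policies equals
`max_{i'} Σ_{i ≤ i'} P i · (p i + (1 - p i)·p i'/(1 - p i'))`, achieved by the cutoff
policy sending message `1` with probability `1` in state `1` and `p i'/(1-p i')` in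
state `0`. -/
theorem stmt6 (n : ℕ) (hn : 0 < n) (p P : Fin n → ℝ)
    (hp0 : ∀ i, 0 < p i) (hp : ∀ i, p i ≤ 1/2)
    (hdec : ∀ i j : Fin n, i < j → p j < p i)
    (hP : ∀ i, 0 ≤ P i) (hPsum : ∑ i, P i = 1) :
    IsGreatest
      {u : ℝ | ∃ (m : ℕ) (σ : Fin m → Bool → ℝ),
        (∀ μ ω, 0 ≤ σ μ ω) ∧ (∀ ω, ∑ μ, σ μ ω = 1) ∧
        u = ∑ i, P i * ∑ μ,
          (if σ μ false * (1 - p i) ≤ σ μ true * p i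
            then p i * σ μ true + (1 - p i) * σ μ false else 0)}
      (Finset.univ.sup' (Finset.univ_nonempty_iff.mpr ⟨⟨0, hn⟩⟩)
        (fun i' : Fin n => ∑ i,
          if i ≤ i' then P i * (p i + (1 - p i) * p i' / (1 - p i')) else 0)) := by
  have h1 : ∀ i : Fin n, (0:ℝ) < 1 - p i := fun i => by linarith [hp i]
  set V : Fin n → ℝ := fun i' => ∑ i, if i ≤ i'
      then P i * (p i + (1 - p i) * p i' / (1 - p i')) else 0 with hVdef
  have hVnn : ∀ i', 0 ≤ V i' := by
    intro i'
    refine Finset.sum_nonneg fun i _ => ?_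
    split
    · exact mul_nonneg (hP i) (add_nonneg (hp0 i).le
        (div_nonneg (mul_nonneg (h1 i).le (hp0 i').le) (h1 i').le))
    · exact le_rfl
  have hVle : ∀ i', V i' ≤ Finset.univ.sup' (Finset.univ_nonempty_iff.mpr ⟨⟨0, hn⟩⟩) V :=
    fun i' => Finset.le_sup' V (Finset.mem_univ i')
  have hMnn : 0 ≤ Finset.univ.sup' (Finset.univ_nonempty_iff.mpr ⟨⟨0, hn⟩⟩) V :=
    le_trans (hVnn ⟨0, hn⟩) (hVle ⟨0, hn⟩)
  constructor
  · -- membership: the cutoff policy achieves the max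
    obtain ⟨i₀, -, hi₀⟩ := Finset.exists_mem_eq_sup'
      (Finset.univ_nonempty_iff.mpr (⟨⟨0, hn⟩⟩ : Nonempty (Fin n))) V
    set q := p i₀ / (1 - p i₀) with hqdef
    have hq0 : 0 ≤ q := div_nonneg (hp0 i₀).le (h1 i₀).le
    have hq1 : q ≤ 1 := by
      rw [hqdef, div_le_one (h1 i₀)]; linarith [hp i₀]
    have hq' : q * (1 - p i₀) = p i₀ := div_mul_cancel₀ _ (h1 i₀).ne'
    refine ⟨2, fun μ ω => if μ.val = 1 then (if ω then 1 else q)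
      else (if ω then 0 else 1 - q), ?_, ?_, ?_⟩
    · intro μ ω
      dsimp only
      split <;> split <;> linarith
    · intro ω
      cases ω <;> rw [Fin.sum_univ_two] <;> norm_num
    · rw [hi₀]
      refine Finset.sum_congr rfl fun i _ => ?_
      rw [Fin.sum_univ_two]
      simp only [Fin.val_zero, Fin.val_one, if_true, if_false, Bool.false_eq_true,
        one_ne_zero, zero_ne_one, reduceIte]
      have e0 : (if (1 - q) * (1 - p i) ≤ 0 * p i
          then p i * 0 + (1 - p i) * (1 - q) else 0) = 0 := by
        split_ifs with h
        · have h2 : 0 ≤ (1 - q) * (1 - p i) := mul_nonneg (by linarith) (h1 i).le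
          have h3 : (1 - q) * (1 - p i) = 0 := le_antisymm (by linarith) h2
          linear_combination h3
        · rfl
      have e1 : (if q * (1 - p i) ≤ 1 * p i
          then p i * 1 + (1 - p i) * q else 0)
          = (if i ≤ i₀ then p i + (1 - p i) * p i₀ / (1 - p i₀) else 0) := by
        by_cases hi : i ≤ i₀
        · have hle : p i₀ ≤ p i := by
            rcases eq_or_lt_of_le hi with h | h
            · rw [h]
            · exact (hdec i i₀ h).le
          have hc1 : q * (1 - p i) ≤ 1 * p i := by
            nlinarith [mul_nonneg hq0 (sub_nonneg.mpr hle)]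
          rw [if_pos hc1, if_pos hi, hqdef]
          ring
        · have hlt : p i < p i₀ := hdec i₀ i (not_le.mp hi)
          have hc1 : ¬ (q * (1 - p i) ≤ 1 * p i) := by
            rw [not_le]
            nlinarith [mul_nonneg hq0 (sub_nonneg.mpr hlt.le)]
          rw [if_neg hc1, if_neg hi]
      rw [e0, e1]
      split_ifs with h
      · ring
      · ring
  · -- upper bound
    rintro u ⟨m, σ, hσ0, hσ1, rfl⟩
    have key : ∀ μ : Fin m,
        (∑ i, P i * (if σ μ false * (1 - p i) ≤ σ μ true * p i
          then p i * σ μ true + (1 - p i) * σ μ false else 0))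
        ≤ σ μ true * Finset.univ.sup' (Finset.univ_nonempty_iff.mpr ⟨⟨0, hn⟩⟩) V := by
      intro μ
      set A := Finset.univ.filter
        (fun i : Fin n => σ μ false * (1 - p i) ≤ σ μ true * p i) with hAdef
      by_cases hA : A.Nonempty
      · set i' := A.max' hA with hi'def
        have hi'A : i' ∈ A := A.max'_mem hA
        have hcond : σ μ false * (1 - p i') ≤ σ μ true * p i' :=
          (Finset.mem_filter.mp hi'A).2
        have hr : σ μ false ≤ σ μ true * (p i' / (1 - p i')) := by
          rw [← mul_div_assoc, le_div_iff₀ (h1 i')]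
          exact hcond
        calc (∑ i, P i * (if σ μ false * (1 - p i) ≤ σ μ true * p i
              then p i * σ μ true + (1 - p i) * σ μ false else 0))
            ≤ ∑ i, σ μ true * (if i ≤ i'
              then P i * (p i + (1 - p i) * p i' / (1 - p i')) else 0) := by
              refine Finset.sum_le_sum fun i _ => ?_
              by_cases hc : σ μ false * (1 - p i) ≤ σ μ true * p i
              · have hiA : i ∈ A := Finset.mem_filter.mpr ⟨Finset.mem_univ i, hc⟩
                have hii' : i ≤ i' := A.le_max' i hiA
                rw [if_pos hc, if_pos hii']
                have hmd : (1 - p i) * p i' / (1 - p i') = (1 - p i) * (p i' / (1 - p i')) :=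
                  mul_div_assoc _ _ _
                rw [hmd]
                nlinarith [mul_le_mul_of_nonneg_left hr
                  (mul_nonneg (hP i) (h1 i).le), hP i, hp0 i, hσ0 μ true]
              · rw [if_neg hc]
                have : (0:ℝ) ≤ (if i ≤ i'
                    then P i * (p i + (1 - p i) * p i' / (1 - p i')) else 0) := by
                  split
                  · exact mul_nonneg (hP i) (add_nonneg (hp0 i).le
                      (div_nonneg (mul_nonneg (h1 i).le (hp0 i').le) (h1 i').le))
                  · exact le_rfl
                simpa using mul_nonneg (hσ0 μ true) this
          _ = σ μ true * V i' := by rw [← Finset.mul_sum]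
          _ ≤ σ μ true * Finset.univ.sup' (Finset.univ_nonempty_iff.mpr ⟨⟨0, hn⟩⟩) V :=
              mul_le_mul_of_nonneg_left (hVle i') (hσ0 μ true)
      · have hz : (∑ i, P i * (if σ μ false * (1 - p i) ≤ σ μ true * p i
            then p i * σ μ true + (1 - p i) * σ μ false else 0)) = 0 := by
          refine Finset.sum_eq_zero fun i _ => ?_
          have : ¬ (σ μ false * (1 - p i) ≤ σ μ true * p i) := by
            intro hc
            exact hA ⟨i, Finset.mem_filter.mpr ⟨Finset.mem_univ i, hc⟩⟩
          rw [if_neg this, mul_zero]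
        rw [hz]
        exact mul_nonneg (hσ0 μ true) hMnn
    calc (∑ i, P i * ∑ μ, (if σ μ false * (1 - p i) ≤ σ μ true * p i
          then p i * σ μ true + (1 - p i) * σ μ false else 0))
        = ∑ μ, ∑ i, P i * (if σ μ false * (1 - p i) ≤ σ μ true * p i
          then p i * σ μ true + (1 - p i) * σ μ false else 0) := by
          simp_rw [Finset.mul_sum]
          exact Finset.sum_comm
      _ ≤ ∑ μ, σ μ true * Finset.univ.sup' (Finset.univ_nonempty_iff.mpr ⟨⟨0, hn⟩⟩) V :=
          Finset.sum_le_sum fun μ _ => key μ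
      _ = Finset.univ.sup' (Finset.univ_nonempty_iff.mpr ⟨⟨0, hn⟩⟩) V := by
          rw [← Finset.sum_mul, hσ1 true, one_mul]
end

section
/- The non-adaptive querying decision problem with partition queries is NP-hard: there is a polynomial-time reduction from Set Cover such that (U, S, K) admits a set cover of size ≤ K if and only if the constructed persuasion instance admits a set of ≤ K partition queries whose induced common refinement completely separates all receiver types (every cell of the refinement is a singleton). -/
/-! Two distinct types `τ_∅` and `τ_e` are told apart by `q_s` exactly when `e ∈ s`, so
complete separation forces every element to be covered; conversely, of two distinct types
at least one is some `τ_e`, and a set covering `e` separates them. -/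

/-- The cell of the partition query `q_s` (for a subset `s ⊆ U`) containing receiver
type `τ` in the Set-Cover gadget: the types are `Option U`, where `none` is `τ_∅` and
`some e` is `τ_e`.  Query `q_s` has singleton cells `{τ_e}` for `e ∈ s` and one big cell
consisting of `τ_∅` together with all `τ_e` for `e ∉ s`. -/
def cellQ {U : Type} (s : Set U) (τ : Option U) : Set (Option U) :=
  {τ' | (∃ e ∈ s, τ = some e ∧ τ' = τ) ∨
    ((¬ ∃ e ∈ s, τ = some e) ∧ ¬ ∃ e ∈ s, τ' = some e)}

section

variable {U : Type}

theorem mem_cellQ_iff {s : Set U} {τ τ' : Option U} :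
    τ' ∈ cellQ s τ ↔ τ' = τ ∨ (τ ∉ some '' s ∧ τ' ∉ some '' s) := by
  simp only [cellQ, Set.mem_ofPred_eq, Set.mem_image]
  grind

theorem iInter_cellQ_eq_singleton_iff {C : Set (Set U)} {τ : Option U} :
    ⋂ s ∈ C, cellQ s τ = {τ} ↔ ∀ τ' ≠ τ, ∃ s ∈ C, τ ∈ some '' s ∨ τ' ∈ some '' s := by
  simp only [Set.eq_singleton_iff_unique_mem, Set.mem_iInter₂, mem_cellQ_iff, implies_true,
    true_and, or_iff_not_imp_right, not_and_or, not_not]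
  refine forall_congr' fun τ' => ?_
  grind

theorem separates_iff_covers {C : Set (Set U)} :
    (∀ τ : Option U, ⋂ s ∈ C, cellQ s τ = {τ}) ↔ ∀ e : U, ∃ s ∈ C, e ∈ s := by
  simp only [iInter_cellQ_eq_singleton_iff]
  constructor
  · intro h e
    obtain ⟨s, hs, he⟩ := h none (some e) (Option.some_ne_none e)
    exact ⟨s, hs, by simpa using he⟩
  · intro hcov τ τ' hne
    cases τ with
    | some e =>
      obtain ⟨s, hs, he⟩ := hcov e
      exact ⟨s, hs, Or.inl (Set.mem_image_of_mem _ he)⟩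
    | none =>
      obtain ⟨e, rfl⟩ := Option.ne_none_iff_exists'.mp hne
      obtain ⟨s, hs, he⟩ := hcov e
      exact ⟨s, hs, Or.inr (Set.mem_image_of_mem _ he)⟩

end

theorem stmt10_general (U : Type) (S : Finset (Set U)) (K : ℕ) :
    (∃ C : Finset (Set U), C ⊆ S ∧ C.card ≤ K ∧ ∀ e : U, ∃ s ∈ C, e ∈ s) ↔
    (∃ C : Finset (Set U), C ⊆ S ∧ C.card ≤ K ∧
      ∀ τ : Option U, (⋂ s ∈ C, cellQ s τ) = {τ}) :=
  exists_congr fun _ => and_congr_right' <| and_congr_right' <|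
    separates_iff_covers.symm

/-- NP-hardness reduction correctness (decision-problem equivalence): the Set-Cover
instance `(U, S, K)` admits a cover of size at most `K` if and only if the constructed
persuasion instance admits at most `K` partition queries from `{q_s : s ∈ S}` whose
common refinement completely separates all receiver types (every common-refinement cell
is a singleton). -/
theorem stmt10 (U : Type) [Fintype U] (S : Finset (Set U)) (K : ℕ) :
    (∃ C : Finset (Set U), C ⊆ S ∧ C.card ≤ K ∧ ∀ e : U, ∃ s ∈ C, e ∈ s) ↔
    (∃ C : Finset (Set U), C ⊆ S ∧ C.card ≤ K ∧
      ∀ τ : Option U, (⋂ s ∈ C, cellQ s τ) = {τ}) :=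
  stmt10_general U S K
end

section
/- The combinatorial core of the NP-hardness reduction: for the Set Cover gadget, a subcollection S' ⊆ S covers U if and only if the corresponding query set {q_s : s ∈ S'} completely separates the type set T(U) = {τ_∅} ∪ {τ_e : e ∈ U}; in particular, if some element e is uncovered by S', then τ_e and τ_∅ lie in the same cell of every query in S', so the common refinement cell of τ_∅ is not a singleton. -/
section

variable {U : Type}

theorem mem_cellQ_self (s : Set U) (τ : Option U) : τ ∈ cellQ s τ := by
  by_cases h : ∃ e ∈ s, τ = some e
  · obtain ⟨e, he, rfl⟩ := h
    exact Or.inl ⟨e, he, rfl, rfl⟩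
  · exact Or.inr ⟨h, h⟩

theorem cellQ_some_of_mem {s : Set U} {e : U} (he : e ∈ s) : cellQ s (some e) = {some e} := by
  ext τ
  simp [cellQ, he]

theorem cellQ_none (s : Set U) : cellQ s none = (some '' s)ᶜ := by
  ext τ
  simp [cellQ, eq_comm]

theorem some_mem_cellQ_none_iff {s : Set U} {e : U} : some e ∈ cellQ s none ↔ e ∉ s := by
  simp [cellQ_none]

theorem biInter_cellQ_none_eq_singleton_iff (S' : Set (Set U)) :
    (⋂ s ∈ S', cellQ s none) = {none} ↔ ∀ e : U, ∃ s ∈ S', e ∈ s := by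
  simp [Set.eq_singleton_iff_unique_mem, Option.forall, some_mem_cellQ_none_iff, mem_cellQ_self]

theorem biInter_cellQ_some_of_mem {S' : Set (Set U)} {s : Set U} {e : U} (hs : s ∈ S')
    (he : e ∈ s) : (⋂ t ∈ S', cellQ t (some e)) = {some e} :=
  subset_antisymm ((Set.biInter_subset_of_mem hs).trans (cellQ_some_of_mem he).subset)
    (Set.singleton_subset_iff.2 (Set.mem_iInter₂.2 fun t _ => mem_cellQ_self t _))

end

/-- Combinatorial core of the NP-hardness reduction: a subcollection `S'` covers `U`
iff the corresponding query set `{q_s : s ∈ S'}` completely separates the type set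
`T(U) = {τ_∅} ∪ {τ_e : e ∈ U}`; in particular, if some element `e` is uncovered by
`S'`, then `τ_e` lies in the same cell as `τ_∅` for every query of `S'`, so the
common-refinement cell of `τ_∅` is not a singleton. -/
theorem stmt11 (U : Type) (S' : Set (Set U)) :
    ((∀ e : U, ∃ s ∈ S', e ∈ s) ↔
      ∀ τ : Option U, (⋂ s ∈ S', cellQ s τ) = {τ}) ∧
    (∀ e : U, (∀ s ∈ S', e ∉ s) →
      (∀ s ∈ S', some e ∈ cellQ s none) ∧
      (⋂ s ∈ S', cellQ s none) ≠ {(none : Option U)}) := by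
  refine ⟨⟨fun hcov τ => ?_, fun hsep => (biInter_cellQ_none_eq_singleton_iff S').1 (hsep none)⟩,
    fun e he => ⟨fun s hs => some_mem_cellQ_none_iff.2 (he s hs), fun h => ?_⟩⟩
  · cases τ with
    | none => exact (biInter_cellQ_none_eq_singleton_iff S').2 hcov
    | some e =>
      obtain ⟨s, hs, hes⟩ := hcov e
      exact biInter_cellQ_some_of_mem hs hes
  · obtain ⟨s, hs, hes⟩ := (biInter_cellQ_none_eq_singleton_iff S').1 h e
    exact he s hs hes
end

section
/- Submodularity of sender utility in Binary BP (interval form): define for an interval of types {L,...,H} the value f(L,H) := max over cutoffs i' ∈ {L,...,H} of Σ_{i=L}^{i'} P(τ_i)·(p_i + (1-p_i)·p_{i'}/(1-p_{i'})). Then for any nested intervals [L̂, Ĥ] ⊆ [L̃, H̃] and any common cut point M with L̂ ≤ M < Ĥ, the marginal gain from splitting satisfies f(L̃, M) + f(M+1, H̃) − f(L̃, H̃) ≥ f(L̂, M) + f(M+1, Ĥ) − f(L̂, Ĥ). -/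
/-!
Take maximising cutoffs `i`, `k`, `j` of `f(Lt,Ht)`, `f(Lh,M)`, `f(M+1,Hh)`. Since `t ↦ t/(1-t)`
is increasing and `p` is decreasing, the weight a type receives under cutoff `i'` decreases in
`i'`; hence `cutVal` has increasing differences: dropping the types below `K` costs less under a
larger cutoff. Exchanging cutoffs between the three maximisers (once if `i < j`, twice if
`j ≤ i`, not at all if `i ≤ M`) bounds the three maxima on the left by three feasible values on
the right.
-/

/-- The sender's (unnormalized) expected utility from the cutoff-`i'` messaging policy
against the interval of types `{L, …, i'}`:
`Σ_{i=L}^{i'} P i · (p i + (1 - p i)·p i'/(1 - p i'))`. -/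
noncomputable def cutVal (P p : ℕ → ℝ) (L i' : ℕ) : ℝ :=
  ∑ i ∈ Finset.Icc L i', P i * (p i + (1 - p i) * p i' / (1 - p i'))

/-- The sender's optimal expected utility against the interval of types `{L, …, H}`:
the maximum of `cutVal` over cutoffs `i' ∈ {L, …, H}`. -/
noncomputable def fInt (P p : ℕ → ℝ) (L H : ℕ) : ℝ :=
  (Finset.Icc L H).fold max (cutVal P p L L) (cutVal P p L)

theorem div_one_sub_le_div_one_sub {a b : ℝ} (hb : b < 1) (hab : a ≤ b) :
    a / (1 - a) ≤ b / (1 - b) := by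
  rw [div_le_div_iff₀ (by linarith) (by linarith)]
  nlinarith

section

variable (P p : ℕ → ℝ)

theorem le_fInt {L i H : ℕ} (hL : L ≤ i) (hH : i ≤ H) : cutVal P p L i ≤ fInt P p L H :=
  (Finset.le_fold_max _).2 (Or.inr ⟨i, Finset.mem_Icc.2 ⟨hL, hH⟩, le_rfl⟩)

theorem fInt_eq_sup' {L H : ℕ} (h : L ≤ H) :
    fInt P p L H = (Finset.Icc L H).sup' (Finset.nonempty_Icc.2 h) (cutVal P p L) := by
  refine le_antisymm ((Finset.fold_max_le _).2 ⟨?_, fun i hi => Finset.le_sup' _ hi⟩)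
    (Finset.sup'_le _ _ fun i hi => le_fInt P p (Finset.mem_Icc.1 hi).1 (Finset.mem_Icc.1 hi).2)
  exact Finset.le_sup' _ (Finset.mem_Icc.2 ⟨le_rfl, h⟩)

theorem exists_fInt_eq_cutVal {L H : ℕ} (h : L ≤ H) :
    ∃ i ∈ Finset.Icc L H, fInt P p L H = cutVal P p L i := by
  rw [fInt_eq_sup' P p h]
  exact Finset.exists_mem_eq_sup' _ _

theorem cutVal_eq_sum_Ico_add {L K i : ℕ} (hLK : L ≤ K) (hK : K ≤ i + 1) :
    cutVal P p L i =
      (∑ t ∈ Finset.Ico L K, P t * (p t + (1 - p t) * p i / (1 - p i))) + cutVal P p K i := by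
  simp only [cutVal, ← Finset.Ico_add_one_right_eq_Icc]
  rw [Finset.sum_Ico_consecutive _ hLK hK]

variable {P p}

theorem sum_cutWeight_anti (hP : ∀ t, 0 ≤ P t) (hp : ∀ t, p t < 1) (hanti : Antitone p)
    (s : Finset ℕ) {k i : ℕ} (hki : k ≤ i) :
    ∑ t ∈ s, P t * (p t + (1 - p t) * p i / (1 - p i)) ≤
      ∑ t ∈ s, P t * (p t + (1 - p t) * p k / (1 - p k)) := by
  refine Finset.sum_le_sum fun t _ => ?_
  have hodds := div_one_sub_le_div_one_sub (hp k) (hanti hki)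
  have h1t : 0 ≤ 1 - p t := by linarith [hp t]
  simp only [mul_div_assoc]
  gcongr
  exact hP t

theorem cutVal_add_cutVal_le (hP : ∀ t, 0 ≤ P t) (hp : ∀ t, p t < 1) (hanti : Antitone p)
    {L K k i : ℕ} (hLK : L ≤ K) (hKk : K ≤ k + 1) (hki : k ≤ i) :
    cutVal P p L i + cutVal P p K k ≤ cutVal P p L k + cutVal P p K i := by
  rw [cutVal_eq_sum_Ico_add P p hLK hKk, cutVal_eq_sum_Ico_add P p hLK (by omega)]
  linarith [sum_cutWeight_anti hP hp hanti (Finset.Ico L K) hki]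

end

theorem stmt12_general (P p : ℕ → ℝ) (hP : ∀ i, 0 ≤ P i)
    (hp : ∀ i, p i ≤ 1/2) (hdec : ∀ i j, i < j → p j < p i)
    (Lt Lh M Hh Ht : ℕ) (h1 : Lt ≤ Lh) (h2 : Lh ≤ M) (h3 : M < Hh) (h4 : Hh ≤ Ht) :
    fInt P p Lh M + fInt P p (M+1) Hh - fInt P p Lh Hh ≤
      fInt P p Lt M + fInt P p (M+1) Ht - fInt P p Lt Ht := by
  have hlt : ∀ i, p i < 1 := fun i => (hp i).trans_lt (by norm_num)
  have hanti : Antitone p := StrictAnti.antitone fun a b h => hdec a b h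
  obtain ⟨k, hk, hkf⟩ := exists_fInt_eq_cutVal P p h2
  obtain ⟨j, hj, hjf⟩ := exists_fInt_eq_cutVal P p h3
  obtain ⟨i, hi, hif⟩ := exists_fInt_eq_cutVal P p (show Lt ≤ Ht by omega)
  rw [Finset.mem_Icc] at hk hj hi
  rw [hkf, hjf, hif]
  rcases le_or_gt i M with hiM | hMi
  · linarith [le_fInt P p hi.1 hiM, le_fInt P p hj.1 (hj.2.trans h4),
      le_fInt P p hk.1 (hk.2.trans h3.le)]
  have swap_k := cutVal_add_cutVal_le hP hlt hanti h1 (by omega : Lh ≤ k + 1) (by omega : k ≤ i)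
  rcases le_or_gt j i with hji | hij
  · have swap_j := cutVal_add_cutVal_le hP hlt hanti (by omega : Lh ≤ M + 1)
      (by omega : M + 1 ≤ j + 1) hji
    linarith [le_fInt P p (h1.trans hk.1) hk.2, le_fInt P p (by omega : Lh ≤ j) hj.2,
      le_fInt P p hMi hi.2]
  · linarith [le_fInt P p (h1.trans hk.1) hk.2, le_fInt P p (by omega : Lh ≤ i) (by omega : i ≤ Hh),
      le_fInt P p hj.1 (hj.2.trans h4)]

/-- Submodularity of sender utility in Binary BP (interval form): for nested intervals
`[Lh, Hh] ⊆ [Lt, Ht]` and a common cut point `M` with `Lh ≤ M < Hh`, the marginal gain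
from splitting at `M` is weakly larger on the larger interval:
`f(Lt,M) + f(M+1,Ht) − f(Lt,Ht) ≥ f(Lh,M) + f(M+1,Hh) − f(Lh,Hh)`.
Types are ordered so that the priors `p i ∈ (0,1/2]` are strictly decreasing, and the
type weights `P i` are nonnegative. -/
theorem stmt12 (P p : ℕ → ℝ) (hP : ∀ i, 0 ≤ P i) (hp0 : ∀ i, 0 < p i)
    (hp : ∀ i, p i ≤ 1/2) (hdec : ∀ i j, i < j → p j < p i)
    (Lt Lh M Hh Ht : ℕ) (h1 : Lt ≤ Lh) (h2 : Lh ≤ M) (h3 : M < Hh) (h4 : Hh ≤ Ht) :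
    fInt P p Lh M + fInt P p (M+1) Hh - fInt P p Lh Hh ≤
      fInt P p Lt M + fInt P p (M+1) Ht - fInt P p Lt Ht :=
  stmt12_general P p hP hp hdec Lt Lh M Hh Ht h1 h2 h3 h4
end

section
/- For the d-state, d-action matching-utility setting, a single simulation query can distinguish among d receiver types: with types p_1,...,p_d where p_i puts mass 2/(d+1) on state ω_i and 1/(d+1) on each other state, under the messaging policy σ with σ(a_1|ω_1) = c and σ(a_1|ω_j) = 2c for all j ≠ 1 (for any c ∈ (0, 1/2]), upon receiving message m = a_1, type 1 best-responds with action a_1 while every type i ≠ 1 best-responds with action a_i; hence the query (σ, a_1) induces a partition of the d types into d singletons. -/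
/-- A single simulation query can distinguish among `d` receiver types in the d-state,
d-action matching-utility setting (`u_R(ω_j, a_k) = 1{j=k}`).  Type `i`'s prior puts
mass `2/(d+1)` on state `i` and `1/(d+1)` elsewhere.  Under the messaging policy with
`σ(a_1|ω_1) = c` and `σ(a_1|ω_j) = 2c` for `j ≠ 1` (any `c ∈ (0,1/2]`), upon message
`m = a_1` type `1` best-responds with action `a_1` (weakly optimal, ties broken toward
the recommended action), while each type `i ≠ 1` strictly best-responds with `a_i`;
hence the query partitions the `d` types into `d` singletons. -/
theorem stmt16 (d : ℕ) (hd : 0 < d) (c : ℝ) (hc0 : 0 < c) (hc : c ≤ 1/2) :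
    let prior : Fin d → Fin d → ℝ :=
      fun i ω => if ω = i then 2 / ((d : ℝ) + 1) else 1 / ((d : ℝ) + 1)
    let σ1 : Fin d → ℝ := fun ω => if ω = ⟨0, hd⟩ then c else 2 * c
    let score : Fin d → Fin d → ℝ :=
      fun i a => ∑ ω, (if ω = a then (1:ℝ) else 0) * σ1 ω * prior i ω
    (∀ a, score ⟨0, hd⟩ a ≤ score ⟨0, hd⟩ ⟨0, hd⟩) ∧
    (∀ i : Fin d, i ≠ ⟨0, hd⟩ → ∀ a, a ≠ i → score i a < score i i) := by

  intro prior σ1 score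
  have hdpos : (0:ℝ) < (d:ℝ) + 1 := by positivity
  have hscore : ∀ i a : Fin d, score i a = σ1 a * prior i a := by
    intro i a
    simp only [score]
    rw [Finset.sum_eq_single a]
    · simp
    · intro b _ hb; simp [hb]
    · simp
  constructor
  · intro a
    rw [hscore, hscore]
    by_cases ha : a = ⟨0, hd⟩
    · subst ha; exact le_refl _
    · simp only [σ1, prior, if_pos rfl, if_neg ha]
      apply le_of_eq; ring
  · intro i hi a ha
    rw [hscore, hscore]
    simp only [σ1, prior, if_pos rfl, if_neg hi, if_neg ha]
    have h1 : (0:ℝ) < 1 / ((d:ℝ) + 1) := by positivity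
    have h2 : (2:ℝ) / ((d:ℝ) + 1) = 2 * (1 / ((d:ℝ) + 1)) := by ring
    by_cases ha0 : a = ⟨0, hd⟩ <;> simp only [ha0, if_true, if_false, eq_self_iff_true, h2] <;> nlinarith [h1]
end
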